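/- arXiv:math/0209309 — 6 statements merged into one kernel-verified Lean document; each statement's English description precedes it below -/
import Mathlib

section
/- Let I be a monomial ideal in k[x_1,...,x_d] with a minimal irreducible decomposition I = J_{m_1} ∩ ... ∩ J_{m_r}. Let l be the largest exponent of any variable appearing in the indexing monomials m_1,...,m_r, and let k' be the largest exponent of a variable appearing in a minimal monomial generating set of I. Then l = k'. -/
open MvPolynomial

def ExpCond {d : ℕ} (μ a : Fin d →₀ ℕ) : Prop := ∃ w, μ w ≠ 0 ∧ μ w ≤ a w

/-- For a monomial `m` with exponent vector `m : Fin d →₀ ℕ`, the irreducible monomial ideal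
`J_m` generated by the pure powers `x_i^{m i}` for `i` in the support of `m`. -/
noncomputable def Jm {k : Type*} [Field k] {d : ℕ} (m : Fin d →₀ ℕ) :
    Ideal (MvPolynomial (Fin d) k) :=
  Ideal.span ((fun i => X i ^ m i) '' {i | m i ≠ 0})

lemma mem_Jm_iff {k : Type*} [Field k] {d : ℕ} (m : Fin d →₀ ℕ)
    (p : MvPolynomial (Fin d) k) :
    p ∈ Jm (k := k) m ↔ ∀ a ∈ p.support, ExpCond m a := by
  have h : Jm (k := k) m =
      Ideal.span ((fun s => monomial s (1 : k)) ''
        ((fun w => Finsupp.single w (m w)) '' {w | m w ≠ 0})) := by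
    rw [Jm, Set.image_image]
    congr 1
    exact Set.image_congr fun i _ => X_pow_eq_monomial
  rw [h, mem_ideal_span_monomial_image]
  constructor
  · intro H a ha
    obtain ⟨si, hsi, hle⟩ := H a ha
    obtain ⟨w, hw, rfl⟩ := hsi
    exact ⟨w, hw, Finsupp.single_le_iff.mp hle⟩
  · intro H a ha
    obtain ⟨w, hw, hle⟩ := H a ha
    exact ⟨_, ⟨w, hw, rfl⟩, Finsupp.single_le_iff.mpr hle⟩

/-- If `I = J_{m_1} ∩ ... ∩ J_{m_r}` is a minimal irreducible decomposition of a monomial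
ideal (no component can be omitted, and no indexing monomial can be replaced by a proper
monomial factor), then the largest exponent `l` appearing in the indexing monomials equals
the largest exponent `k'` appearing in a minimal monomial generating set of `I`. -/
theorem max_exponent_of_minimal_irreducible_decomposition
    {k : Type*} [Field k] {d : ℕ} (I : Ideal (MvPolynomial (Fin d) k))
    (r : ℕ) (m : Fin r → (Fin d →₀ ℕ))
    (hdecomp : I = ⨅ i, Jm (m i))
    (hnoomit : ∀ i : Fin r, (⨅ j ∈ Finset.univ.erase i, Jm (m j) :
        Ideal (MvPolynomial (Fin d) k)) ≠ I)
    (hnoreplace : ∀ i : Fin r, ∀ m' : Fin d →₀ ℕ, m' ≤ m i → m' ≠ m i →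
      (Jm m' ⊓ ⨅ j ∈ Finset.univ.erase i, Jm (m j) : Ideal (MvPolynomial (Fin d) k)) ≠ I)
    (l : ℕ) (hl : l = Finset.univ.sup fun i : Fin r => Finset.univ.sup fun v => m i v)
    (G : Finset (Fin d →₀ ℕ))
    (hG : I = Ideal.span ((fun s => monomial s (1 : k)) '' (G : Set (Fin d →₀ ℕ))))
    (hGmin : ∀ g ∈ G, monomial g (1 : k) ∉
      Ideal.span ((fun s => monomial s (1 : k)) '' ((G.erase g : Finset (Fin d →₀ ℕ)) :
        Set (Fin d →₀ ℕ))))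
    (k' : ℕ) (hk' : k' = G.sup fun g => Finset.univ.sup fun v => g v) :
    l = k' := by
  -- membership characterizations
  have memI : ∀ p : MvPolynomial (Fin d) k,
      p ∈ I ↔ ∀ a ∈ p.support, ∀ j, ExpCond (m j) a := by
    intro p
    rw [hdecomp, Ideal.mem_iInf]
    simp only [mem_Jm_iff]
    exact ⟨fun h a ha j => h j a ha, fun h j a ha => h a ha j⟩
  have memImono : ∀ a : Fin d →₀ ℕ,
      monomial a (1 : k) ∈ I ↔ ∀ j, ExpCond (m j) a := by
    intro a
    rw [memI]
    simp [support_monomial]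
  have memG : ∀ a : Fin d →₀ ℕ,
      monomial a (1 : k) ∈ I ↔ ∃ g ∈ G, g ≤ a := by
    intro a
    rw [hG, mem_ideal_span_monomial_image]
    simp [support_monomial]
  -- k' ≤ l
  have hkl : k' ≤ l := by
    rw [hk']
    apply Finset.sup_le
    intro g hg
    apply Finset.sup_le
    intro v _
    by_contra hlt
    push_neg at hlt
    set a := g - Finsupp.single v 1 with ha
    have hav : a v = g v - 1 := by simp [ha, Finsupp.tsub_apply]
    have haw : ∀ w, w ≠ v → a w = g w := by
      intro w hw
      simp [ha, Finsupp.tsub_apply, Finsupp.single_apply, hw.symm]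
    have hgI : monomial g (1 : k) ∈ I := (memG g).2 ⟨g, hg, le_rfl⟩
    have hconds := (memImono g).1 hgI
    have hmlv : ∀ j, m j v ≤ l := by
      intro j
      rw [hl]
      exact le_trans (Finset.le_sup (Finset.mem_univ v))
        (Finset.le_sup (f := fun i => Finset.univ.sup fun v => m i v) (Finset.mem_univ j))
    have haI : monomial a (1 : k) ∈ I := by
      rw [memImono]
      intro j
      obtain ⟨w, hw0, hwle⟩ := hconds j
      refine ⟨w, hw0, ?_⟩
      rcases eq_or_ne w v with rfl | hwv
      · have h1 := hmlv j
        rw [hav]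
        omega
      · rw [haw w hwv]; exact hwle
    obtain ⟨h, hhG, hha⟩ := (memG a).1 haI
    have hale : a ≤ g := tsub_le_self
    have hne : h ≠ g := by
      intro e
      have := hha v
      rw [hav, e] at this
      omega
    apply hGmin g hg
    rw [mem_ideal_span_monomial_image]
    intro xi hxi
    simp [support_monomial] at hxi
    subst hxi
    exact ⟨h, by simp [Finset.mem_erase, hne, hhG], le_trans hha hale⟩
  -- l ≤ k'
  have hlk : l ≤ k' := by
    rw [hl]
    apply Finset.sup_le
    intro i _
    apply Finset.sup_le
    intro v _
    rcases Nat.eq_zero_or_pos (m i v) with h0 | hpos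
    · omega
    set m' := m i - Finsupp.single v 1 with hm'
    have hm'v : m' v = m i v - 1 := by simp [hm', Finsupp.tsub_apply]
    have hm'w : ∀ w, w ≠ v → m' w = m i w := by
      intro w hw
      simp [hm', Finsupp.tsub_apply, Finsupp.single_apply, hw.symm]
    have hle : m' ≤ m i := tsub_le_self
    have hnemi : m' ≠ m i := by
      intro e
      have := congrArg (fun f : Fin d →₀ ℕ => f v) e
      simp only [hm'v] at this
      omega
    have hne := hnoreplace i m' hle hnemi
    have memA : ∀ p : MvPolynomial (Fin d) k,
        p ∈ (Jm m' ⊓ ⨅ j ∈ Finset.univ.erase i, Jm (m j) :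
          Ideal (MvPolynomial (Fin d) k)) ↔
        ∀ a ∈ p.support, ExpCond m' a ∧ ∀ j, j ≠ i → ExpCond (m j) a := by
      intro p
      rw [Submodule.mem_inf, mem_Jm_iff]
      simp only [Ideal.mem_iInf, mem_Jm_iff, Finset.mem_erase, Finset.mem_univ, and_true]
      constructor
      · rintro ⟨h1, h2⟩ a ha
        exact ⟨h1 a ha, fun j hj => h2 j hj a ha⟩
      · intro h
        exact ⟨fun a ha => (h a ha).1, fun j hj a ha => (h a ha).2 j hj⟩
    have hwit : ∃ a : Fin d →₀ ℕ,
        ¬((ExpCond m' a ∧ ∀ j, j ≠ i → ExpCond (m j) a) ↔ ∀ j, ExpCond (m j) a) := by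
      by_contra hall
      push_neg at hall
      apply hne
      ext p
      rw [memA, memI]
      constructor
      · intro h a ha
        exact (hall a).mp (h a ha)
      · intro h a ha
        exact (hall a).mpr (h a ha)
    obtain ⟨a, hiff⟩ := hwit
    have hb : ∃ b : Fin d →₀ ℕ, (∀ j, ExpCond (m j) b) ∧
        ∀ w, w ≠ v → m i w ≠ 0 → b w < m i w := by
      by_cases hQ : ∀ j, ExpCond (m j) a
      · -- case B : a ∈ I but fails the m' condition
        have hP : ¬(ExpCond m' a ∧ ∀ j, j ≠ i → ExpCond (m j) a) := fun h => hiff ⟨fun _ => hQ, fun _ => h⟩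
        have hnc : ¬ ExpCond m' a := by
          intro h
          exact hP ⟨h, fun j _ => hQ j⟩
        refine ⟨a, hQ, ?_⟩
        intro w hwv hmw
        by_contra hge
        push_neg at hge
        exact hnc ⟨w, by rw [hm'w w hwv]; exact hmw, by rw [hm'w w hwv]; exact hge⟩
      · -- case A : some condition fails for a, so it must be condition i
        have hP : ExpCond m' a ∧ ∀ j, j ≠ i → ExpCond (m j) a := by
          by_contra hP
          exact hiff (iff_of_false hP hQ)
        have hni : ¬ ExpCond (m i) a := by
          intro h
          exact hQ fun j => if hj : j = i then hj ▸ h else hP.2 j hj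
        set b := a + Finsupp.single v (m i v) with hbdef
        have hbv : b v = a v + m i v := by simp [hbdef]
        have hbw' : ∀ w, w ≠ v → b w = a w := by
          intro w hw
          simp [hbdef, Finsupp.single_apply, hw.symm]
        refine ⟨b, ?_, ?_⟩
        · intro j
          rcases eq_or_ne j i with rfl | hj
          · exact ⟨v, hpos.ne', by rw [hbv]; omega⟩
          · obtain ⟨w, hw0, hwle⟩ := hP.2 j hj
            refine ⟨w, hw0, ?_⟩
            rcases eq_or_ne w v with rfl | hwv
            · rw [hbv]; omega
            · rw [hbw' w hwv]; exact hwle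
        · intro w hwv hmw
          rw [hbw' w hwv]
          by_contra hge
          push_neg at hge
          exact hni ⟨w, hmw, hge⟩
    obtain ⟨b, hbI, hbw⟩ := hb
    obtain ⟨g, hgG, hgb⟩ := (memG b).1 ((memImono b).2 hbI)
    have hgk' : g v ≤ k' := by
      rw [hk']
      exact le_trans (Finset.le_sup (Finset.mem_univ v))
        (Finset.le_sup (f := fun g => Finset.univ.sup fun v => g v) hgG)
    have hmg : m i v ≤ g v := by
      by_contra hgv
      push_neg at hgv
      set c := b - Finsupp.single v (b v - g v) with hc
      have hcv : c v = g v := by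
        have := hgb v
        simp [hc, Finsupp.tsub_apply]
        omega
      have hcw : ∀ w, w ≠ v → c w = b w := by
        intro w hw
        simp [hc, Finsupp.tsub_apply, Finsupp.single_apply, hw.symm]
      have hgc : g ≤ c := by
        intro w
        rcases eq_or_ne w v with rfl | hwv
        · rw [hcv]
        · rw [hcw w hwv]; exact hgb w
      have hcI : monomial c (1 : k) ∈ I := (memG c).2 ⟨g, hgG, hgc⟩
      obtain ⟨w, hw0, hwle⟩ := (memImono c).1 hcI i
      rcases eq_or_ne w v with rfl | hwv
      · rw [hcv] at hwle; omega
      · rw [hcw w hwv] at hwle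
        exact absurd hwle (not_le.mpr (hbw w hwv hw0))
    omega
  omega
end

section
/- Let I be a monomial ideal in S = k[x_1,...,x_d] and let l be the largest exponent of any variable occurring in a generating set of I. If I = J_{m_1} ∩ ... ∩ J_{m_r} is an irreducible decomposition in which no m_i can be replaced by a proper monomial factor, then every variable exponent appearing in each m_i is at most l. -/
open MvPolynomial

lemma mem_Jm_iff_s2 {k : Type*} [Field k] {d : ℕ} (m : Fin d →₀ ℕ)
    (f : MvPolynomial (Fin d) k) :
    f ∈ Jm m ↔ ∀ s ∈ f.support, ∃ u, m u ≠ 0 ∧ m u ≤ s u := by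
  have himg : ((fun i => (X i : MvPolynomial (Fin d) k) ^ m i) '' {i | m i ≠ 0})
      = (fun s => monomial s (1 : k)) ''
        ((fun i => Finsupp.single i (m i)) '' {i | m i ≠ 0}) := by
    rw [Set.image_image]
    exact Set.image_congr fun i _ => X_pow_eq_monomial
  rw [Jm, himg, mem_ideal_span_monomial_image]
  constructor
  · intro h s hs
    obtain ⟨si, ⟨u, hu, rfl⟩, hle⟩ := h s hs
    exact ⟨u, hu, Finsupp.single_le_iff.mp hle⟩
  · intro h s hs
    obtain ⟨u, hu, hle⟩ := h s hs
    exact ⟨_, ⟨u, hu, rfl⟩, Finsupp.single_le_iff.mpr hle⟩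

lemma monomial_mem_Jm_iff {k : Type*} [Field k] {d : ℕ} (m s : Fin d →₀ ℕ) :
    (monomial s (1 : k)) ∈ Jm m ↔ ∃ u, m u ≠ 0 ∧ m u ≤ s u := by
  rw [mem_Jm_iff_s2]
  simp [support_monomial, (one_ne_zero : (1 : k) ≠ 0)]

/-- If `l` is the largest exponent of a variable occurring in a monomial generating set of `I`,
and `I = J_{m_1} ∩ ... ∩ J_{m_r}` is an irreducible decomposition in which no `m_i` can be
replaced by a proper monomial factor, then every exponent in each `m_i` is at most `l`. -/
theorem exponents_of_irreducible_components_le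
    {k : Type*} [Field k] {d : ℕ} (I : Ideal (MvPolynomial (Fin d) k))
    (G : Finset (Fin d →₀ ℕ))
    (hG : I = Ideal.span ((fun s => monomial s (1 : k)) '' (G : Set (Fin d →₀ ℕ))))
    (l : ℕ) (hl : l = G.sup fun g => Finset.univ.sup fun v => g v)
    (r : ℕ) (m : Fin r → (Fin d →₀ ℕ))
    (hdecomp : I = ⨅ i, Jm (m i))
    (hnoreplace : ∀ i : Fin r, ∀ m' : Fin d →₀ ℕ, m' ≤ m i → m' ≠ m i →
      (Jm m' ⊓ ⨅ j ∈ Finset.univ.erase i, Jm (m j) : Ideal (MvPolynomial (Fin d) k)) ≠ I) :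
    ∀ (i : Fin r) (v : Fin d), m i v ≤ l := by
  intro i v
  by_contra hlt
  push_neg at hlt
  -- bound on exponents of generators
  have hGle : ∀ w ∈ G, ∀ u, w u ≤ l := by
    intro w hw u
    rw [hl]
    exact le_trans (Finset.le_sup (f := fun v => w v) (Finset.mem_univ u))
      (Finset.le_sup (f := fun g => Finset.univ.sup fun v => g v) hw)
  -- membership criterion for I
  have hmemI : ∀ f : MvPolynomial (Fin d) k,
      f ∈ I ↔ ∀ s ∈ f.support, ∃ w ∈ G, w ≤ s := by
    intro f
    rw [hG, mem_ideal_span_monomial_image]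
    simp
  have hIle : ∀ j, I ≤ Jm (m j) := fun j => hdecomp ▸ iInf_le _ j
  classical
  set m' : Fin d →₀ ℕ := (m i).update v l with hm'
  have hm'app : ∀ u, m' u = if u = v then l else m i u := by
    intro u
    rw [hm', Finsupp.coe_update]
    by_cases h : u = v
    · subst h; simp
    · simp [Function.update_of_ne h, h]
  have hm'v : m' v = l := by rw [hm'app]; simp
  have hm'ne : ∀ u, u ≠ v → m' u = m i u := by
    intro u hu; rw [hm'app]; simp [hu]
  have hle : m' ≤ m i := by
    rw [Finsupp.le_def]
    intro u
    by_cases h : u = v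
    · subst h; rw [hm'v]; exact le_of_lt hlt
    · rw [hm'ne u h]
  have hne : m' ≠ m i := by
    intro h
    have := DFunLike.congr_fun h v
    rw [hm'v] at this
    omega
  apply hnoreplace i m' hle hne
  apply le_antisymm
  · -- the new intersection is contained in I
    intro f hf
    rw [Submodule.mem_inf] at hf
    obtain ⟨hf1, hf2⟩ := hf
    have hf2' : ∀ j, j ≠ i → f ∈ Jm (m j) := by
      intro j hj
      simp only [Submodule.mem_iInf] at hf2
      exact hf2 j (Finset.mem_erase.mpr ⟨hj, Finset.mem_univ j⟩)
    rw [hmemI]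
    intro s hs
    rw [mem_Jm_iff_s2] at hf1
    obtain ⟨u, hu, hule⟩ := hf1 s hs
    by_cases huv : u = v
    · subst huv
      -- here l ≤ s u; bump the exponent at u and use the decomposition
      have hls : l ≤ s u := by rw [hm'v] at hule; exact hule
      have hs'mem : (monomial (s + Finsupp.single u (m i u)) (1 : k)) ∈ I := by
        rw [hdecomp, Submodule.mem_iInf]
        intro j
        rw [monomial_mem_Jm_iff]
        by_cases hji : j = i
        · subst hji
          refine ⟨u, by omega, ?_⟩
          simp
        · obtain ⟨w, hw, hwle⟩ := (mem_Jm_iff_s2 (m j) f).mp (hf2' j hji) s hs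
          refine ⟨w, hw, le_trans hwle ?_⟩
          simp [Finsupp.add_apply]
      rw [hmemI] at hs'mem
      obtain ⟨w, hwG, hws'⟩ := hs'mem (s + Finsupp.single u (m i u))
        (by simp [support_monomial])
      refine ⟨w, hwG, ?_⟩
      rw [Finsupp.le_def]
      intro t
      by_cases htu : t = u
      · subst htu
        exact le_trans (hGle w hwG t) hls
      · have := Finsupp.le_def.mp hws' t
        simpa [Finsupp.add_apply, Finsupp.single_apply, Ne.symm htu] using this
    · -- here s already dominates a generator of Jm (m i)
      have hsmem : (monomial s (1 : k)) ∈ I := by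
        rw [hdecomp, Submodule.mem_iInf]
        intro j
        rw [monomial_mem_Jm_iff]
        by_cases hji : j = i
        · subst hji
          rw [hm'ne u huv] at hu hule
          exact ⟨u, hu, hule⟩
        · exact (mem_Jm_iff_s2 (m j) f).mp (hf2' j hji) s hs
      rw [hmemI] at hsmem
      exact hsmem s (by simp [support_monomial])
  · -- I is contained in the new intersection
    rw [le_inf_iff]
    constructor
    · intro f hfI
      rw [mem_Jm_iff_s2]
      intro s hs
      obtain ⟨w, hwG, hws⟩ := (hmemI f).mp hfI s hs
      have hwI : (monomial w (1 : k)) ∈ I := by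
        rw [hmemI]
        intro t ht
        simp only [support_monomial, if_neg (one_ne_zero : (1 : k) ≠ 0),
          Finset.mem_singleton] at ht
        exact ⟨w, hwG, ht.ge⟩
      have hw : (monomial w (1 : k)) ∈ Jm (m i) := hIle i hwI
      rw [monomial_mem_Jm_iff] at hw
      obtain ⟨u, hu, huw⟩ := hw
      have huv : u ≠ v := by
        intro h
        subst h
        exact absurd (le_trans huw (hGle w hwG u)) (not_le.mpr hlt)
      refine ⟨u, ?_, ?_⟩
      · rw [hm'ne u huv]; exact hu
      · rw [hm'ne u huv]
        exact le_trans huw (Finsupp.le_def.mp hws u)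
    · simp only [le_iInf_iff]
      intro j _
      exact hIle j
end

section
/- Let R be a ring of the form S/J with S = k[x_1,...,x_d] a polynomial ring over a field k of prime characteristic and J a monomial ideal. Then for any ideal I of R, the tight closure satisfies I* = ∩_P (I + P), where P ranges over the minimal primes of R. -/
open MvPolynomial

/-- The Frobenius power `I^{[q]}`: the ideal generated by the `q`-th powers of the elements
of `I`. -/
def frobeniusPower {R : Type*} [CommRing R] (I : Ideal R) (q : ℕ) : Ideal R :=
  Ideal.span ((fun r => r ^ q) '' (I : Set R))

/-- The tight closure `I*` of an ideal `I` in a ring of characteristic `p`. -/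
def tightClosureSet {R : Type*} [CommRing R] (p : ℕ) (I : Ideal R) : Set R :=
  { z | ∃ c : R, (∀ P ∈ minimalPrimes R, c ∉ P) ∧
      ∃ N : ℕ, ∀ e ≥ N, c * z ^ p ^ e ∈ frobeniusPower I (p ^ e) }

/-!
If `P` is a minimal prime of `R = k[x]/J`, its preimage is minimal over the monomial ideal `J`,
hence generated by variables, so `R/P` is a polynomial ring. Tight closure maps into tight
closure along `R → R/P`, and every ideal of a polynomial ring is tightly closed: `k[x]` is free
over its subring of `q`-th powers, so `(I^[q] : z^q) ⊆ (I : z)^[q] ⊆ (I : z)^q`, and Krull's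
intersection theorem forces a test element for `z ∉ I` to vanish. Hence `I* ⊆ I + P`.

Conversely, a sum `c` of elements each lying in all minimal primes but one avoids every minimal
prime and satisfies `c z^q ∈ I^[q] + nil(R)` for `z ∈ ⋂ (I + P)`; raising to a `p^M`-th power
with `nil(R)^M = 0` kills the nilpotent part.
-/

section CommRing

variable {R : Type*} [CommRing R]

theorem pow_mem_frobeniusPower {I : Ideal R} {x : R} (hx : x ∈ I) (q : ℕ) :
    x ^ q ∈ frobeniusPower I q :=
  Ideal.subset_span ⟨x, hx, rfl⟩

theorem frobeniusPower_le_pow (I : Ideal R) (q : ℕ) : frobeniusPower I q ≤ I ^ q :=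
  Ideal.span_le.mpr <| by rintro _ ⟨x, hx, rfl⟩; exact Ideal.pow_mem_pow hx q

theorem map_frobeniusPower_le {T : Type*} [CommRing T] (f : R →+* T) (I : Ideal R)
    (q : ℕ) : (frobeniusPower I q).map f ≤ frobeniusPower (I.map f) q := by
  rw [frobeniusPower, Ideal.map_span, Ideal.span_le]
  rintro _ ⟨_, ⟨x, hx, rfl⟩, rfl⟩
  rw [SetLike.mem_coe, map_pow]
  exact pow_mem_frobeniusPower (Ideal.mem_map_of_mem f hx) q

theorem subset_tightClosureSet (p : ℕ) (I : Ideal R) : (I : Set R) ⊆ tightClosureSet p I :=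
  fun _ hz => ⟨1, fun _ hP h => hP.1.1.ne_top ((Ideal.eq_top_iff_one _).mpr h), 0,
    fun _ _ => by rw [one_mul]; exact pow_mem_frobeniusPower hz _⟩

theorem mem_tightClosureSet_iff_of_isDomain [IsDomain R] {p : ℕ} {I : Ideal R} {z : R} :
    z ∈ tightClosureSet p I ↔
      ∃ c ≠ 0, ∃ N : ℕ, ∀ e ≥ N, c * z ^ p ^ e ∈ frobeniusPower I (p ^ e) := by
  simp [tightClosureSet, IsDomain.minimalPrimes_eq_singleton_bot]

theorem map_mem_tightClosureSet {T : Type*} [CommRing T] [IsDomain T] {f : R →+* T}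
    (hf : RingHom.ker f ∈ minimalPrimes R) {p : ℕ} {I : Ideal R} {z : R}
    (hz : z ∈ tightClosureSet p I) : f z ∈ tightClosureSet p (I.map f) := by
  obtain ⟨c, hc, N, hN⟩ := hz
  refine mem_tightClosureSet_iff_of_isDomain.mpr ⟨f c, fun h => hc _ hf h, N, fun e he => ?_⟩
  rw [← map_pow, ← map_mul]
  exact map_frobeniusPower_le f I _ (Ideal.mem_map_of_mem f (hN e he))

theorem mem_sup_ker_of_mem_tightClosureSet {T : Type*} [CommRing T] [IsDomain T] {f : R →+* T}
    (hf : Function.Surjective f) (hker : RingHom.ker f ∈ minimalPrimes R) {p : ℕ}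
    (hT : ∀ J : Ideal T, tightClosureSet p J ⊆ J) {I : Ideal R} {z : R}
    (hz : z ∈ tightClosureSet p I) : z ∈ I ⊔ RingHom.ker f := by
  rw [← Ideal.comap_map_of_surjective' f hf, Ideal.mem_comap]
  exact hT _ (map_mem_tightClosureSet hker hz)

theorem exists_notMem_forall_mem_minimalPrimes_ne [IsNoetherianRing R] {P : Ideal R}
    (hP : P ∈ minimalPrimes R) : ∃ c ∉ P, ∀ Q ∈ minimalPrimes R, Q ≠ P → c ∈ Q := by
  set s := (minimalPrimes.finite_of_isNoetherianRing R).toFinset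
  have hs : ∀ Q, Q ∈ s ↔ Q ∈ minimalPrimes R := fun Q => Set.Finite.mem_toFinset _
  have hnle : ¬ (s.erase P).inf id ≤ P := by
    intro hle
    obtain ⟨Q, hQ, hQP⟩ := (Ideal.IsPrime.inf_le' hP.1.1).mp hle
    obtain ⟨hne, hQs⟩ := Finset.mem_erase.mp hQ
    exact hne (le_antisymm hQP (hP.2 ((hs Q).mp hQs).1 hQP))
  obtain ⟨c, hc, hcP⟩ := Set.not_subset.mp hnle
  exact ⟨c, hcP, fun Q hQ hQP =>
    Finset.inf_le (f := id) (Finset.mem_erase.mpr ⟨hQP, (hs Q).mpr hQ⟩) hc⟩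

theorem exists_mul_mem_sup_nilradical [IsNoetherianRing R] :
    ∃ c : R, (∀ P ∈ minimalPrimes R, c ∉ P) ∧ ∀ (J : Ideal R) (x : R),
      (∀ P ∈ minimalPrimes R, x ∈ J ⊔ P) → c * x ∈ J ⊔ nilradical R := by
  classical
  choose! a ha hne using fun P (hP : P ∈ minimalPrimes R) =>
    exists_notMem_forall_mem_minimalPrimes_ne hP
  set s := (minimalPrimes.finite_of_isNoetherianRing R).toFinset
  have hs : ∀ Q, Q ∈ s ↔ Q ∈ minimalPrimes R := fun Q => Set.Finite.mem_toFinset _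
  refine ⟨∑ P ∈ s, a P, fun P hP hmem => ?_, fun J x hx => ?_⟩
  · rw [← Finset.add_sum_erase s a ((hs P).mpr hP)] at hmem
    refine ha P hP ((Ideal.add_mem_iff_left P (Ideal.sum_mem _ fun Q hQ => ?_)).mp hmem)
    obtain ⟨hQP, hQs⟩ := Finset.mem_erase.mp hQ
    exact hne Q ((hs Q).mp hQs) P hP (Ne.symm hQP)
  · rw [Finset.sum_mul]
    refine Ideal.sum_mem _ fun Q hQs => ?_
    have hQ := (hs Q).mp hQs
    obtain ⟨y, hy, n, hn, rfl⟩ := Submodule.mem_sup.mp (hx Q hQ)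
    rw [mul_add]
    refine Submodule.add_mem_sup (J.mul_mem_left _ hy) ?_
    rw [nilradical, ← Ideal.sInf_minimalPrimes]
    refine Submodule.mem_sInf.mpr fun P hP => ?_
    by_cases hPQ : P = Q
    · subst hPQ; exact Ideal.mul_mem_left _ _ hn
    · exact Ideal.mul_mem_right _ P (hne Q hQ P hP hPQ)

end CommRing

section CharP

variable {R : Type*} [CommRing R] {p : ℕ} [Fact p.Prime] [CharP R p]

theorem pow_mem_frobeniusPower_sup {I P : Ideal R} {z : R} (hz : z ∈ I ⊔ P) (e : ℕ) :
    z ^ p ^ e ∈ frobeniusPower I (p ^ e) ⊔ P := by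
  obtain ⟨a, ha, b, hb, rfl⟩ := Submodule.mem_sup.mp hz
  rw [add_pow_char_pow]
  exact Submodule.add_mem_sup (pow_mem_frobeniusPower ha _)
    (P.pow_mem_of_mem hb _ (pow_pos (Fact.out : p.Prime).pos e))

theorem pow_mem_frobeniusPower_mul {I : Ideal R} {q : ℕ} {v : R}
    (hv : v ∈ frobeniusPower I q) (s : ℕ) : v ^ p ^ s ∈ frobeniusPower I (q * p ^ s) := by
  have hle : frobeniusPower I q
      ≤ (frobeniusPower I (q * p ^ s)).comap (iterateFrobenius R p s) := by
    refine Ideal.span_le.mpr ?_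
    rintro _ ⟨y, hy, rfl⟩
    rw [SetLike.mem_coe, Ideal.mem_comap, iterateFrobenius_def, ← pow_mul]
    exact pow_mem_frobeniusPower hy _
  simpa only [Ideal.mem_comap, iterateFrobenius_def] using hle hv

theorem exists_pow_mem_frobeniusPower_of_mem_sup_nilradical [IsNoetherianRing R] :
    ∃ M : ℕ, ∀ (I : Ideal R) (e : ℕ) (y : R), y ∈ frobeniusPower I (p ^ e) ⊔ nilradical R →
      y ^ p ^ M ∈ frobeniusPower I (p ^ (e + M)) := by
  obtain ⟨M, hM⟩ := IsNoetherianRing.isNilpotent_nilradical R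
  refine ⟨M, fun I e y hy => ?_⟩
  obtain ⟨v, hv, n, hn, rfl⟩ := Submodule.mem_sup.mp hy
  have hnM : n ^ M = 0 := by
    simpa only [hM, Ideal.zero_eq_bot, Ideal.mem_bot] using Ideal.pow_mem_pow hn M
  rw [add_pow_char_pow, pow_eq_zero_of_le (Nat.lt_pow_self (Fact.out : p.Prime).one_lt).le hnM,
    add_zero, pow_add]
  exact pow_mem_frobeniusPower_mul hv M

theorem iInf_sup_minimalPrimes_subset_tightClosureSet [IsNoetherianRing R] (I : Ideal R) :
    ((⨅ P ∈ minimalPrimes R, I ⊔ P : Ideal R) : Set R) ⊆ tightClosureSet p I := by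
  obtain ⟨c, hc, hcx⟩ := exists_mul_mem_sup_nilradical (R := R)
  obtain ⟨M, hM⟩ := exists_pow_mem_frobeniusPower_of_mem_sup_nilradical (R := R) (p := p)
  intro z hz
  have hzP : ∀ P ∈ minimalPrimes R, z ∈ I ⊔ P := by
    simpa only [SetLike.mem_coe, Submodule.mem_iInf] using hz
  refine ⟨c ^ p ^ M, fun P hP h => hc P hP (hP.1.1.mem_of_pow_mem _ h), M, fun e he => ?_⟩
  obtain ⟨e, rfl⟩ := Nat.exists_eq_add_of_le' he
  have := hM I e _ (hcx _ _ fun P hP => pow_mem_frobeniusPower_sup (hzP P hP) e)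
  rwa [mul_pow, ← pow_mul, ← pow_add] at this

end CharP

namespace MvPolynomial

section FrobeniusCombination

variable {k : Type*} [Field k] {σ : Type*} {p : ℕ} [Fact p.Prime] [CharP k p] {e : ℕ}

theorem coeff_pow_char_pow_smul (f : MvPolynomial σ k) (u : σ →₀ ℕ) :
    coeff (p ^ e • u) (f ^ p ^ e) = coeff u f ^ p ^ e := by
  rw [← map_iterateFrobenius_expand p f e, coeff_map,
    coeff_expand_smul _ (pow_ne_zero e (Fact.out : p.Prime).ne_zero), iterateFrobenius_def]

theorem coeff_pow_char_pow_of_not_dvd (f : MvPolynomial σ k) {t : σ →₀ ℕ} {i : σ}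
    (h : ¬ p ^ e ∣ t i) : coeff t (f ^ p ^ e) = 0 := by
  rw [← map_iterateFrobenius_expand p f e, coeff_map, coeff_expand_of_not_dvd _ h, map_zero]

theorem coeff_pow_char_pow_mul_monomial [DecidableEq σ] {r r₀ : σ →₀ ℕ} (hr : ∀ i, r i < p ^ e)
    (hr₀ : ∀ i, r₀ i < p ^ e) (t : MvPolynomial σ k) (u : σ →₀ ℕ) (a : k) :
    coeff (p ^ e • u + r₀) (t ^ p ^ e * monomial r a) =
      if r = r₀ then coeff u t ^ p ^ e * a else 0 := by
  split_ifs with h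
  · rw [← h, coeff_mul_monomial, coeff_pow_char_pow_smul]
  · rw [coeff_mul_monomial']
    split_ifs with hle
    · obtain ⟨i, hi⟩ := DFunLike.ne_iff.mp h
      refine mul_eq_zero_of_left (coeff_pow_char_pow_of_not_dvd t (i := i) ?_) a
      rintro ⟨m, hm⟩
      have hle := hle i
      simp only [Finsupp.tsub_apply, Finsupp.add_apply, Finsupp.smul_apply, smul_eq_mul]
        at hm hle
      have hmod : (r₀ i + p ^ e * u i) % p ^ e = (r i + p ^ e * m) % p ^ e := by
        congr 1; omega
      rw [Nat.add_mul_mod_self_left, Nat.add_mul_mod_self_left, Nat.mod_eq_of_lt (hr₀ i),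
        Nat.mod_eq_of_lt (hr i)] at hmod
      exact hi hmod.symm
    · rfl

/- `k[σ]` is free over its subring of `p^e`-th powers, with basis the products `b x^r` of a basis
vector `b` of `k` over `k^{p^e}` and a monomial with `r < p^e` componentwise;
`frobeniusCombination` sends `g` to `∑ (g (b, r))^{p^e} b x^r`. -/
variable (k σ p e) in
abbrev FrobeniusIndex : Type _ :=
  Module.Basis.ofVectorSpaceIndex (iterateFrobenius k p e).fieldRange k ×
    {r : σ →₀ ℕ // ∀ i, r i < p ^ e}

variable (k σ p e) in
noncomputable def frobeniusCombination :
    (FrobeniusIndex k σ p e →₀ MvPolynomial σ k) →+ MvPolynomial σ k :=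
  Finsupp.liftAddHom fun x => (AddMonoidHom.mulRight (monomial x.2.1 (x.1 : k))).comp
    (iterateFrobenius (MvPolynomial σ k) p e).toAddMonoidHom

theorem frobeniusCombination_apply (g : FrobeniusIndex k σ p e →₀ MvPolynomial σ k) :
    frobeniusCombination k σ p e g = g.sum fun x t => t ^ p ^ e * monomial x.2.1 (x.1 : k) := by
  simp [frobeniusCombination, Function.comp_def, iterateFrobenius_def]

theorem frobeniusCombination_single (x : FrobeniusIndex k σ p e) (t : MvPolynomial σ k) :
    frobeniusCombination k σ p e (Finsupp.single x t) = t ^ p ^ e * monomial x.2.1 (x.1 : k) := by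
  rw [frobeniusCombination, Finsupp.liftAddHom_apply_single]
  simp [iterateFrobenius_def]

theorem frobeniusCombination_smul (a : MvPolynomial σ k)
    (g : FrobeniusIndex k σ p e →₀ MvPolynomial σ k) :
    frobeniusCombination k σ p e (a • g) = a ^ p ^ e * frobeniusCombination k σ p e g := by
  rw [frobeniusCombination_apply, frobeniusCombination_apply,
    Finsupp.sum_smul_index fun _ => by simp [(Fact.out : p.Prime).ne_zero], Finsupp.mul_sum]
  simp only [mul_pow, mul_assoc]

theorem coeff_frobeniusCombination [DecidableEq σ]
    (g : FrobeniusIndex k σ p e →₀ MvPolynomial σ k) (u : σ →₀ ℕ)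
    (r₀ : {r : σ →₀ ℕ // ∀ i, r i < p ^ e}) :
    coeff (p ^ e • u + r₀.1) (frobeniusCombination k σ p e g) =
      g.sum fun x t => if x.2 = r₀ then coeff u t ^ p ^ e * (x.1 : k) else 0 := by
  rw [frobeniusCombination_apply, Finsupp.sum, coeff_sum]
  exact Finset.sum_congr rfl fun x _ => by
    rw [coeff_pow_char_pow_mul_monomial x.2.2 r₀.2]
    simp only [Subtype.ext_iff]

theorem frobeniusCombination_injective : Function.Injective (frobeniusCombination k σ p e) := by
  classical
  refine (injective_iff_map_eq_zero _).mpr fun g hg => Finsupp.ext fun x₀ => ?_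
  by_cases hx₀ : x₀ ∈ g.support
  swap
  · exact Finsupp.notMem_support_iff.mp hx₀
  refine MvPolynomial.ext _ _ fun u => ?_
  set K := (iterateFrobenius k p e).fieldRange
  set s := g.support.filter (·.2 = x₀.2)
  have hK : ∀ j, coeff u (g (j, x₀.2)) ^ p ^ e ∈ K :=
    fun j => ⟨coeff u (g (j, x₀.2)), iterateFrobenius_def p e _⟩
  have hs : ∀ x ∈ s, (x.1, x₀.2) = x := fun x hx => Prod.ext rfl (Finset.mem_filter.mp hx).2.symm
  -- The coefficient of `x^{p^e u + r₀}` gives a `k^{p^e}`-linear relation in the basis of `k`.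
  have hsum : ∑ j ∈ s.image Prod.fst,
      (⟨_, hK j⟩ : K) • Module.Basis.ofVectorSpace K k j = 0 := by
    have hcoeff := congrArg (coeff (p ^ e • u + x₀.2.1)) hg
    rw [coeff_frobeniusCombination, coeff_zero, Finsupp.sum, ← Finset.sum_filter] at hcoeff
    rw [Finset.sum_image fun x hx y hy hxy => by rw [← hs x hx, ← hs y hy, hxy], ← hcoeff]
    refine Finset.sum_congr rfl fun x hx => ?_
    rw [Module.Basis.ofVectorSpace_apply_self]
    change coeff u (g (x.1, x₀.2)) ^ p ^ e * (x.1 : k) = _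
    rw [hs x hx]
  have := linearIndependent_iff'.mp (Module.Basis.ofVectorSpace K k).linearIndependent _ _ hsum
    x₀.1 (Finset.mem_image_of_mem Prod.fst (Finset.mem_filter.mpr ⟨hx₀, rfl⟩))
  exact pow_eq_zero_iff (pow_ne_zero e (Fact.out : p.Prime).ne_zero) |>.mp
    (congrArg Subtype.val this)

theorem frobeniusCombination_surjective :
    Function.Surjective (frobeniusCombination k σ p e) := by
  set K := (iterateFrobenius k p e).fieldRange
  set B := Module.Basis.ofVectorSpace K k
  have hq : 0 < p ^ e := pow_pos (Fact.out : p.Prime).pos e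
  have hmonomial : ∀ (s : σ →₀ ℕ) (ν : K) j,
      monomial s (ν • B j) ∈ (frobeniusCombination k σ p e).range := by
    intro s ν j
    obtain ⟨y, hy⟩ := RingHom.mem_fieldRange.mp ν.2
    let r : {r : σ →₀ ℕ // ∀ i, r i < p ^ e} :=
      ⟨s.mapRange (· % p ^ e) (Nat.zero_mod _), fun i => Nat.mod_lt _ hq⟩
    have hs : p ^ e • s.mapRange (· / p ^ e) (Nat.zero_div _) + r.1 = s := by
      ext i
      simp [r, Nat.div_add_mod]
    refine ⟨Finsupp.single (j, r) (monomial (s.mapRange (· / p ^ e) (Nat.zero_div _)) y), ?_⟩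
    rw [frobeniusCombination_single, monomial_pow, monomial_mul, ← iterateFrobenius_def, hy,
      Module.Basis.ofVectorSpace_apply_self, hs]
    rfl
  intro f
  suffices f ∈ (frobeniusCombination k σ p e).range from this
  induction f using MvPolynomial.induction_on' with
  | monomial s a =>
    rw [← B.linearCombination_repr a, Finsupp.linearCombination_apply, Finsupp.sum, map_sum]
    exact AddSubgroup.sum_mem _ fun j _ => hmonomial s _ j
  | add f g hf hg => exact AddSubgroup.add_mem _ hf hg

theorem exists_frobeniusCombination_eq_mul {I : Ideal (MvPolynomial σ k)} (t : MvPolynomial σ k)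
    {g : FrobeniusIndex k σ p e →₀ MvPolynomial σ k} (hg : ∀ x, g x ∈ I) :
    ∃ g' : FrobeniusIndex k σ p e →₀ MvPolynomial σ k,
      (∀ x, g' x ∈ I) ∧ frobeniusCombination k σ p e g' = t * frobeniusCombination k σ p e g := by
  choose h hh using fun x : FrobeniusIndex k σ p e =>
    frobeniusCombination_surjective (t * monomial x.2.1 (x.1 : k))
  refine ⟨g.sum fun x a => a • h x, fun y => ?_, ?_⟩
  · rw [Finsupp.sum_apply]
    exact Ideal.sum_mem _ fun x _ => Ideal.mul_mem_right _ _ (hg x)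
  · rw [map_finsuppSum, frobeniusCombination_apply, Finsupp.mul_sum]
    refine Finset.sum_congr rfl fun x _ => ?_
    simp only [frobeniusCombination_smul, hh x, mul_left_comm]

theorem exists_frobeniusCombination_eq_of_mem {I : Ideal (MvPolynomial σ k)}
    {w : MvPolynomial σ k} (hw : w ∈ frobeniusPower I (p ^ e)) :
    ∃ g : FrobeniusIndex k σ p e →₀ MvPolynomial σ k,
      (∀ x, g x ∈ I) ∧ frobeniusCombination k σ p e g = w := by
  obtain ⟨one, hone⟩ := frobeniusCombination_surjective (k := k) (σ := σ) (p := p) (e := e) 1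
  induction hw using Submodule.span_induction with
  | mem _ hy =>
    obtain ⟨y, hy, rfl⟩ := hy
    exact ⟨y • one, fun x => I.mul_mem_right _ hy,
      by rw [frobeniusCombination_smul, hone, mul_one]⟩
  | zero => exact ⟨0, fun _ => I.zero_mem, map_zero _⟩
  | add _ _ _ _ h₁ h₂ =>
    obtain ⟨g₁, hg₁, rfl⟩ := h₁
    obtain ⟨g₂, hg₂, rfl⟩ := h₂
    exact ⟨g₁ + g₂, fun x => I.add_mem (hg₁ x) (hg₂ x), map_add _ _ _⟩
  | smul t _ _ h =>
    obtain ⟨g, hg, rfl⟩ := h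
    exact exists_frobeniusCombination_eq_mul t hg

theorem frobeniusCombination_mem_frobeniusPower_iff {I : Ideal (MvPolynomial σ k)}
    {g : FrobeniusIndex k σ p e →₀ MvPolynomial σ k} :
    frobeniusCombination k σ p e g ∈ frobeniusPower I (p ^ e) ↔ ∀ x, g x ∈ I := by
  refine ⟨fun h => ?_, fun h => ?_⟩
  · obtain ⟨g', hg', heq⟩ := exists_frobeniusCombination_eq_of_mem h
    rwa [frobeniusCombination_injective heq] at hg'
  · rw [frobeniusCombination_apply]
    exact Ideal.sum_mem _ fun x _ => Ideal.mul_mem_right _ _ (pow_mem_frobeniusPower (h x) _)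

theorem mem_frobeniusPower_colon_of_mul_pow_mem {I : Ideal (MvPolynomial σ k)}
    {c z : MvPolynomial σ k} (h : c * z ^ p ^ e ∈ frobeniusPower I (p ^ e)) :
    c ∈ frobeniusPower (I.colon {z}) (p ^ e) := by
  obtain ⟨g, rfl⟩ := frobeniusCombination_surjective (k := k) (σ := σ) (p := p) (e := e) c
  rw [mul_comm, ← frobeniusCombination_smul, frobeniusCombination_mem_frobeniusPower_iff] at h
  rw [frobeniusCombination_mem_frobeniusPower_iff]
  exact fun x => Submodule.mem_colon_singleton.mpr (by simpa [mul_comm] using h x)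

theorem tightClosureSet_subset [Finite σ] (I : Ideal (MvPolynomial σ k)) :
    tightClosureSet p I ⊆ I := by
  intro z hz
  obtain ⟨c, hc, N, hN⟩ := mem_tightClosureSet_iff_of_isDomain.mp hz
  by_contra hzI
  set K : Ideal (MvPolynomial σ k) := I.colon {z}
  have hK : K ≠ ⊤ := fun h => hzI <| by
    simpa using Submodule.mem_colon_singleton.mp (show (1 : MvPolynomial σ k) ∈ K from h ▸ trivial)
  refine hc ?_
  have hcpow : c ∈ ⨅ n : ℕ, K ^ n := by
    refine Submodule.mem_iInf _ |>.mpr fun n => ?_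
    have hn : n ≤ p ^ max N n :=
      (le_max_right N n).trans (Nat.lt_pow_self (Fact.out : p.Prime).one_lt).le
    exact Ideal.pow_le_pow_right hn <| frobeniusPower_le_pow _ _ <|
      mem_frobeniusPower_colon_of_mul_pow_mem (hN _ (le_max_left N n))
  rwa [K.iInf_pow_eq_bot_of_isDomain hK, Ideal.mem_bot] at hcpow

end FrobeniusCombination

section MonomialIdeal

variable {R : Type*} [CommRing R] {σ τ : Type*}

theorem sub_rename_killCompl_mem {f : τ → σ} (hf : Function.Injective f)
    (g : MvPolynomial σ R) :
    g - rename f (killCompl hf g) ∈ Ideal.span (X '' (Set.range f)ᶜ) := by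
  induction g using MvPolynomial.induction_on with
  | C a => simp
  | add g₁ g₂ h₁ h₂ =>
    rw [map_add, map_add, add_sub_add_comm]
    exact Ideal.add_mem _ h₁ h₂
  | mul_X g i h =>
    by_cases hi : i ∈ Set.range f
    · obtain ⟨j, rfl⟩ := hi
      have hX : killCompl hf (X (f j) : MvPolynomial σ R) = X j := by
        rw [← rename_X f j, killCompl_rename_app]
      rw [map_mul, map_mul, hX, rename_X, ← sub_mul]
      exact Ideal.mul_mem_right _ _ h
    · have hX : killCompl hf (X i : MvPolynomial σ R) = 0 := by
        rw [killCompl, aeval_X, dif_neg hi]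
      rw [map_mul, hX, mul_zero, map_zero, sub_zero]
      exact Ideal.mul_mem_left _ _ (Ideal.subset_span ⟨i, hi, rfl⟩)

theorem ker_killCompl {f : τ → σ} (hf : Function.Injective f) :
    RingHom.ker (killCompl (R := R) hf) = Ideal.span (X '' (Set.range f)ᶜ) := by
  refine le_antisymm (fun g hg => ?_) (Ideal.span_le.mpr ?_)
  · simpa [RingHom.mem_ker.mp hg] using sub_rename_killCompl_mem hf g
  · rintro _ ⟨i, hi, rfl⟩
    simp [killCompl, dif_neg hi]

theorem isPrime_span_X_image [IsDomain R] (A : Set σ) :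
    (Ideal.span (X '' A : Set (MvPolynomial σ R))).IsPrime := by
  have := ker_killCompl (R := R) (Subtype.val_injective (p := (· ∈ Aᶜ)))
  rw [Subtype.range_coe, compl_compl] at this
  exact this ▸ RingHom.ker_isPrime _

def IsMonomialIdeal (J : Ideal (MvPolynomial σ R)) : Prop :=
  ∃ G : Set (σ →₀ ℕ), J = Ideal.span ((fun s => monomial s (1 : R)) '' G)

theorem IsMonomialIdeal.eq_span_X_of_mem_minimalPrimes [IsDomain R]
    {J Q : Ideal (MvPolynomial σ R)} (hJ : IsMonomialIdeal J) (hQ : Q ∈ J.minimalPrimes) :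
    Q = Ideal.span (X '' {i | X i ∈ Q}) := by
  classical
  obtain ⟨G, rfl⟩ := hJ
  obtain ⟨⟨hQp, hJQ⟩, hmin⟩ := hQ
  have hle : Ideal.span (X '' {i | X i ∈ Q}) ≤ Q :=
    Ideal.span_le.mpr <| by rintro _ ⟨i, hi, rfl⟩; exact hi
  refine le_antisymm (hmin ⟨isPrime_span_X_image _, Ideal.span_le.mpr ?_⟩ hle) hle
  rintro _ ⟨s, hs, rfl⟩
  have hsQ : monomial s (1 : R) ∈ Q := hJQ (Ideal.subset_span ⟨s, hs, rfl⟩)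
  rw [monomial_eq, C_1, one_mul, Finsupp.prod, hQp.prod_mem_iff] at hsQ
  obtain ⟨i, hi, hXi⟩ := hsQ
  rw [SetLike.mem_coe, mem_ideal_span_X_image]
  intro m hm
  rw [support_monomial, if_neg one_ne_zero, Finset.mem_singleton] at hm
  exact ⟨i, hQp.mem_of_pow_mem _ hXi, hm ▸ Finsupp.mem_support_iff.mp hi⟩

theorem IsMonomialIdeal.exists_surjective_ker_eq_of_mem_minimalPrimes [IsDomain R]
    {J : Ideal (MvPolynomial σ R)} (hJ : IsMonomialIdeal J)
    {P : Ideal (MvPolynomial σ R ⧸ J)} (hP : P ∈ minimalPrimes (MvPolynomial σ R ⧸ J)) :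
    ∃ (A : Set σ) (φ : MvPolynomial σ R ⧸ J →+* MvPolynomial A R),
      Function.Surjective φ ∧ RingHom.ker φ = P := by
  set Q := P.comap (Ideal.Quotient.mk J)
  have hQ : Q ∈ J.minimalPrimes := by
    rw [Ideal.minimalPrimes_eq_comap]
    exact ⟨P, hP, rfl⟩
  have hinj : Function.Injective ((↑) : {i | X i ∉ Q} → σ) := Subtype.val_injective
  set ψ : MvPolynomial σ R →+* MvPolynomial {i | X i ∉ Q} R := ↑(killCompl (R := R) hinj)
  have hker : RingHom.ker ψ = Q := by
    rw [RingHom.ker_coe_toRingHom, ker_killCompl, Subtype.range_coe, Set.compl_ofPred]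
    simp only [not_not]
    exact (hJ.eq_span_X_of_mem_minimalPrimes hQ).symm
  have hψ : ∀ a ∈ J, ψ a = 0 := fun a ha => RingHom.mem_ker.mp (hker.symm ▸ hQ.1.2 ha)
  refine ⟨{i | X i ∉ Q}, Ideal.Quotient.lift J ψ hψ,
    Ideal.Quotient.lift_surjective_of_surjective J hψ
      fun g => ⟨rename _ g, killCompl_rename_app hinj g⟩, ?_⟩
  rw [Ideal.ker_quotient_lift ψ hψ, hker,
    Ideal.map_comap_of_surjective _ Ideal.Quotient.mk_surjective]

end MonomialIdeal

end MvPolynomial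

/-- In a monomial ring `R = k[x_1,...,x_d]/J` (with `J` a monomial ideal, `k` of prime
characteristic `p`), the tight closure of any ideal `I` is `I* = ∩_P (I + P)`, where `P`
ranges over the minimal primes of `R`. -/
theorem tight_closure_eq_inf_over_minimal_primes
    {k : Type*} [Field k] {p : ℕ} (hp : p.Prime) [CharP k p] {d : ℕ}
    (J : Ideal (MvPolynomial (Fin d) k))
    (hJ : ∃ G : Set (Fin d →₀ ℕ), J = Ideal.span ((fun s => monomial s (1 : k)) '' G))
    (I : Ideal (MvPolynomial (Fin d) k ⧸ J)) :
    tightClosureSet p I =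
      ((⨅ P ∈ minimalPrimes (MvPolynomial (Fin d) k ⧸ J), I ⊔ P :
        Ideal (MvPolynomial (Fin d) k ⧸ J)) : Set (MvPolynomial (Fin d) k ⧸ J)) := by
  have : Fact p.Prime := ⟨hp⟩
  refine Set.Subset.antisymm (fun z hz => ?_) ?_
  · simp only [SetLike.mem_coe, Submodule.mem_iInf]
    intro P hP
    obtain ⟨A, φ, hφ, rfl⟩ := IsMonomialIdeal.exists_surjective_ker_eq_of_mem_minimalPrimes hJ hP
    exact mem_sup_ker_of_mem_tightClosureSet hφ hP tightClosureSet_subset hz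
  · -- The zero ring does not have characteristic `p`.
    rcases subsingleton_or_nontrivial (MvPolynomial (Fin d) k ⧸ J) with _ | _
    · exact fun z _ => subset_tightClosureSet p I (Subsingleton.elim (0 : _) z ▸ I.zero_mem)
    · have : CharP (MvPolynomial (Fin d) k ⧸ J) p :=
        charP_of_injective_algebraMap (algebraMap k _).injective p
      exact iInf_sup_minimalPrimes_subset_tightClosureSet I
end

section
/- Let k be a field of characteristic p > 0, R = k[t][x,y], q a power of p, I_q = (x^q, y^q, xy(x−y)(x−ty)), and J_q = I_q + (x^2 y^{q−1}). Then for every nonzero f ∈ k[t], the colon ideal J_q : f equals J_q. -/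
/-!
Since `J_q` is generated by forms and contains `(x, y)^(q+1)`, it suffices to treat the
homogeneous components `w` of degree `d ≤ q` of an element of `J_q : f`. In these degrees the
generator `x²y^(q-1)` does not contribute, so `f w = α x^q + β y^q + u g` with `α, β ∈ k[t]`
and `g = xy(x-y)(x-ty)`. Evaluating at `(x, y) = (1, 0)` and `(1, 1)` kills `g` and shows
`f ∣ α` and `f ∣ α + β`; subtracting, `f w' = u g`. As `g` is primitive (its image under
`y ↦ 1` is monic in `x`), Gauss's lemma gives `f ∣ u`, whence `w ∈ I_q`.
-/

open MvPolynomial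

/-- Katzman's ideal `I_q = (x^q, y^q, xy(x-y)(x-ty))` in `R = k[t][x,y]`, realized as
`MvPolynomial (Fin 2) (Polynomial k)` with `x = X 0`, `y = X 1`, `t = C Polynomial.X`. -/
noncomputable def katzmanIdeal (k : Type*) [Field k] (q : ℕ) :
    Ideal (MvPolynomial (Fin 2) (Polynomial k)) :=
  Ideal.span {X 0 ^ q, X 1 ^ q,
    X 0 * X 1 * (X 0 - X 1) * (X 0 - C Polynomial.X * X 1)}

/-- `τ_q = 1 + t + ... + t^{q-2} ∈ k[t]`. -/
noncomputable def tau (k : Type*) [Field k] (q : ℕ) : Polynomial k :=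
  ∑ i ∈ Finset.range (q - 1), Polynomial.X ^ i

/-- `J_q = I_q + (x² y^{q-1})`. -/
noncomputable def katzmanJ (k : Type*) [Field k] (q : ℕ) :
    Ideal (MvPolynomial (Fin 2) (Polynomial k)) :=
  katzmanIdeal k q + Ideal.span {X 0 ^ 2 * X 1 ^ (q - 1)}

namespace MvPolynomial

variable {σ R : Type*}

section Homogeneous

variable [CommSemiring R]
attribute [local instance] gradedAlgebra

theorem homogeneousComponent_mul_of_isHomogeneous {φ : MvPolynomial σ R} {n : ℕ}
    (hφ : φ.IsHomogeneous n) (p : MvPolynomial σ R) (d : ℕ) :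
    homogeneousComponent d (p * φ) =
      if n ≤ d then homogeneousComponent (d - n) p * φ else 0 := by
  have := DirectSum.coe_decompose_mul_of_right_mem (homogeneousSubmodule σ R) d (a := p)
    ((mem_homogeneousSubmodule n φ).mpr hφ)
  rwa [← decomposition.decompose'_apply, ← decomposition.decompose'_apply]

theorem homogeneousComponent_mul_eq_zero_of_lt {φ : MvPolynomial σ R} {n : ℕ}
    (hφ : φ.IsHomogeneous n) (p : MvPolynomial σ R) {d : ℕ} (hd : d < n) :
    homogeneousComponent d (p * φ) = 0 := by
  rw [homogeneousComponent_mul_of_isHomogeneous hφ, if_neg hd.not_ge]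

theorem exists_homogeneousComponent_mul_eq_mul {φ : MvPolynomial σ R} {n : ℕ}
    (hφ : φ.IsHomogeneous n) (p : MvPolynomial σ R) (d : ℕ) :
    ∃ u, homogeneousComponent d (p * φ) = u * φ := by
  rw [homogeneousComponent_mul_of_isHomogeneous hφ]
  split_ifs
  exacts [⟨_, rfl⟩, ⟨0, (zero_mul φ).symm⟩]

theorem exists_homogeneousComponent_mul_eq_C_mul {φ : MvPolynomial σ R} {n : ℕ}
    (hφ : φ.IsHomogeneous n) (p : MvPolynomial σ R) {d : ℕ} (hd : d ≤ n) :
    ∃ r, homogeneousComponent d (p * φ) = C r * φ := by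
  rw [homogeneousComponent_mul_of_isHomogeneous hφ]
  split_ifs with h
  · exact ⟨coeff 0 p, by rw [Nat.sub_eq_zero_of_le hd, homogeneousComponent_zero]⟩
  · exact ⟨0, by simp⟩

end Homogeneous

theorem C_dvd_of_C_dvd_mul [CommRing R] [IsDomain R] [UniqueFactorizationMonoid R]
    {g : MvPolynomial σ R} (hg : ∀ r, C r ∣ g → IsUnit r) {f : R} {u : MvPolynomial σ R}
    (h : C f ∣ u * g) : C f ∣ u := by
  induction f using UniqueFactorizationMonoid.induction_on_prime generalizing u with
  | h₁ =>
    have hg0 : g ≠ 0 := fun hg0 => not_isUnit_zero (hg 0 (by simp [hg0]))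
    simpa [hg0] using h
  | h₂ f hf => exact (hf.map C).dvd
  | h₃ f π _ hπ ih =>
    have hCπ : Prime (C π : MvPolynomial σ R) := (prime_C_iff σ).mpr hπ
    obtain ⟨u, rfl⟩ :=
      (hCπ.dvd_or_dvd (dvd_of_mul_right_dvd (C_mul (a := π) ▸ h))).resolve_right
        fun hdvd => hπ.not_isUnit (hg π hdvd)
    rw [C_mul, mul_assoc] at h
    rw [C_mul]
    exact mul_dvd_mul_left _ (ih ((mul_dvd_mul_iff_left hCπ.ne_zero).mp h))

end MvPolynomial

noncomputable def katzmanQuartic (k : Type*) [Field k] : MvPolynomial (Fin 2) (Polynomial k) :=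
  X 0 * X 1 * (X 0 - X 1) * (X 0 - C Polynomial.X * X 1)

section Katzman

variable {k : Type*} [Field k] {q : ℕ}

theorem isHomogeneous_katzmanQuartic : (katzmanQuartic k).IsHomogeneous 4 := by
  have hX (i : Fin 2) : (X i : MvPolynomial (Fin 2) (Polynomial k)).IsHomogeneous 1 :=
    isHomogeneous_X _ i
  exact (((hX 0).mul (hX 1)).mul ((hX 0).sub (hX 1))).mul
    ((hX 0).sub ((isHomogeneous_C _ _).mul (hX 1)))

theorem isUnit_of_C_dvd_katzmanQuartic (r : Polynomial k) (h : C r ∣ katzmanQuartic k) :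
    IsUnit r := by
  have hmonic : (Polynomial.X * (Polynomial.X - 1) * (Polynomial.X - Polynomial.C Polynomial.X) :
      Polynomial (Polynomial k)).Monic := by
    have h1 := Polynomial.monic_X_sub_C (1 : Polynomial k)
    rw [Polynomial.C_1] at h1
    exact (Polynomial.monic_X.mul h1).mul (Polynomial.monic_X_sub_C Polynomial.X)
  have hdvd := map_dvd (MvPolynomial.aeval ![(Polynomial.X : Polynomial (Polynomial k)), 1]) h
  simp [katzmanQuartic, Polynomial.C_dvd_iff_dvd_coeff] at hdvd
  exact isUnit_of_dvd_one (hmonic.coeff_natDegree ▸ hdvd _)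

theorem X_zero_pow_mem_katzmanIdeal :
    (X 0 ^ q : MvPolynomial (Fin 2) (Polynomial k)) ∈ katzmanIdeal k q :=
  Ideal.subset_span (by simp)

theorem X_one_pow_mem_katzmanIdeal :
    (X 1 ^ q : MvPolynomial (Fin 2) (Polynomial k)) ∈ katzmanIdeal k q :=
  Ideal.subset_span (by simp)

theorem katzmanQuartic_mem_katzmanIdeal : katzmanQuartic k ∈ katzmanIdeal k q :=
  Ideal.subset_span (by simp [katzmanQuartic])

theorem katzmanIdeal_le_katzmanJ : katzmanIdeal k q ≤ katzmanJ k q :=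
  le_sup_left

theorem X_zero_sq_mul_X_one_pow_mem_katzmanJ :
    (X 0 ^ 2 * X 1 ^ (q - 1) : MvPolynomial (Fin 2) (Polynomial k)) ∈ katzmanJ k q :=
  Ideal.mem_sup_right (Ideal.mem_span_singleton_self _)

theorem exists_eq_of_mem_katzmanJ {w : MvPolynomial (Fin 2) (Polynomial k)}
    (hw : w ∈ katzmanJ k q) : ∃ a b c e : MvPolynomial (Fin 2) (Polynomial k),
      w = a * X 0 ^ q + b * X 1 ^ q + c * katzmanQuartic k + e * (X 0 ^ 2 * X 1 ^ (q - 1)) := by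
  obtain ⟨v, hv, z, hz, rfl⟩ := Submodule.mem_sup.mp hw
  obtain ⟨a, v₁, hv₁, rfl⟩ := Ideal.mem_span_insert.mp hv
  obtain ⟨b, v₂, hv₂, rfl⟩ := Ideal.mem_span_insert.mp hv₁
  obtain ⟨c, rfl⟩ := Ideal.mem_span_singleton'.mp hv₂
  obtain ⟨e, rfl⟩ := Ideal.mem_span_singleton'.mp hz
  exact ⟨a, b, c, e, by rw [katzmanQuartic]; ring⟩

theorem X_zero_pow_mul_X_one_pow_mem_katzmanJ {i j : ℕ} (hij : q + 1 ≤ i + j) :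
    (X 0 ^ i * X 1 ^ j : MvPolynomial (Fin 2) (Polynomial k)) ∈ katzmanJ k q := by
  suffices key : ∀ i j, i + j = q + 1 →
      (X 0 ^ i * X 1 ^ j : MvPolynomial (Fin 2) (Polynomial k)) ∈ katzmanJ k q by
    obtain ⟨i', j', hi, hj, hsum⟩ : ∃ i' j', i' ≤ i ∧ j' ≤ j ∧ i' + j' = q + 1 :=
      ⟨min i (q + 1), q + 1 - min i (q + 1), by omega, by omega, by omega⟩
    obtain ⟨a, rfl⟩ := Nat.exists_eq_add_of_le hi
    obtain ⟨b, rfl⟩ := Nat.exists_eq_add_of_le hj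
    have hsplit : (X 0 ^ (i' + a) * X 1 ^ (j' + b) : MvPolynomial (Fin 2) (Polynomial k)) =
        X 0 ^ i' * X 1 ^ j' * (X 0 ^ a * X 1 ^ b) := by ring
    exact hsplit ▸ Ideal.mul_mem_right _ _ (key i' j' hsum)
  have hx := katzmanIdeal_le_katzmanJ (X_zero_pow_mem_katzmanIdeal (k := k) (q := q))
  have hy := katzmanIdeal_le_katzmanJ (X_one_pow_mem_katzmanIdeal (k := k) (q := q))
  have hg := katzmanIdeal_le_katzmanJ (katzmanQuartic_mem_katzmanIdeal (k := k) (q := q))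
  intro i
  induction i using Nat.strong_induction_on with
  | _ i ih =>
    intro j hij
    match i, j, hij with
    | 0, j, hij =>
      obtain rfl : j = q + 1 := by omega
      simpa [pow_succ'] using Ideal.mul_mem_left _ (X 1) hy
    | 1, j, hij =>
      obtain rfl : j = q := by omega
      simpa using Ideal.mul_mem_left _ (X 0) hy
    | 2, j, hij =>
      obtain rfl : j = q - 1 := by omega
      exact X_zero_sq_mul_X_one_pow_mem_katzmanJ
    | i + 3, 0, hij =>
      obtain rfl : q = i + 2 := by omega
      simpa [pow_succ'] using Ideal.mul_mem_left _ (X 0) hx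
    | i + 3, j + 1, hij =>
      have hrel : (X 0 ^ (i + 3) * X 1 ^ (j + 1) : MvPolynomial (Fin 2) (Polynomial k)) =
          X 0 ^ i * X 1 ^ j * katzmanQuartic k
            + (1 + C Polynomial.X) * (X 0 ^ (i + 2) * X 1 ^ (j + 2))
            - C Polynomial.X * (X 0 ^ (i + 1) * X 1 ^ (j + 3)) := by
        rw [katzmanQuartic]; ring
      rw [hrel]
      exact sub_mem (add_mem (Ideal.mul_mem_left _ _ hg)
        (Ideal.mul_mem_left _ _ (ih _ (by omega) _ (by omega))))
        (Ideal.mul_mem_left _ _ (ih _ (by omega) _ (by omega)))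

theorem mem_katzmanJ_of_isHomogeneous {w : MvPolynomial (Fin 2) (Polynomial k)} {d : ℕ}
    (hw : w.IsHomogeneous d) (hd : q + 1 ≤ d) : w ∈ katzmanJ k q := by
  rw [w.as_sum]
  refine Ideal.sum_mem _ fun m hm => ?_
  have hdeg : m 0 + m 1 = d := by
    simpa [Finsupp.weight_apply, Finsupp.sum_fintype, Fin.sum_univ_two] using
      hw (mem_support_iff.mp hm)
  rw [monomial_eq, Finsupp.prod_fintype _ _ (by simp), Fin.prod_univ_two]
  exact Ideal.mul_mem_left _ _ (X_zero_pow_mul_X_one_pow_mem_katzmanJ (by omega))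

theorem mem_katzmanIdeal_of_C_mul_eq {f α β : Polynomial k} (hf : f ≠ 0)
    {w u : MvPolynomial (Fin 2) (Polynomial k)}
    (h : C f * w = C α * X 0 ^ q + C β * X 1 ^ q + u * katzmanQuartic k) :
    w ∈ katzmanIdeal k q := by
  rcases eq_or_ne q 0 with rfl | hq
  · simpa using Ideal.mul_mem_left _ w (X_zero_pow_mem_katzmanIdeal (k := k) (q := 0))
  have hα : f ∣ α := ⟨eval ![1, 0] w, by
    simpa [katzmanQuartic, hq] using (congrArg (eval ![1, 0]) h).symm⟩
  have hαβ : f ∣ α + β := ⟨eval ![1, 1] w, by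
    simpa [katzmanQuartic] using (congrArg (eval ![1, 1]) h).symm⟩
  obtain ⟨α, rfl⟩ := hα
  obtain ⟨β, rfl⟩ := (dvd_add_right (dvd_mul_right f α)).mp hαβ
  simp only [C_mul] at h
  have hdvd : C f ∣ u * katzmanQuartic k :=
    ⟨w - C α * X 0 ^ q - C β * X 1 ^ q, by linear_combination -h⟩
  obtain ⟨v, rfl⟩ := C_dvd_of_C_dvd_mul isUnit_of_C_dvd_katzmanQuartic hdvd
  have hw : w = C α * X 0 ^ q + C β * X 1 ^ q + v * katzmanQuartic k :=
    mul_left_cancel₀ (C_ne_zero.mpr hf) (by linear_combination h)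
  rw [hw]
  exact add_mem (add_mem (Ideal.mul_mem_left _ _ X_zero_pow_mem_katzmanIdeal)
    (Ideal.mul_mem_left _ _ X_one_pow_mem_katzmanIdeal))
    (Ideal.mul_mem_left _ _ katzmanQuartic_mem_katzmanIdeal)

theorem homogeneousComponent_mem_katzmanJ {f : Polynomial k} (hf : f ≠ 0)
    {w : MvPolynomial (Fin 2) (Polynomial k)} (hw : C f * w ∈ katzmanJ k q) {d : ℕ}
    (hd : d ≤ q) : homogeneousComponent d w ∈ katzmanJ k q := by
  obtain ⟨a, b, c, e, h⟩ := exists_eq_of_mem_katzmanJ hw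
  obtain ⟨α, hα⟩ := exists_homogeneousComponent_mul_eq_C_mul (isHomogeneous_X_pow 0 q) a hd
  obtain ⟨β, hβ⟩ := exists_homogeneousComponent_mul_eq_C_mul (isHomogeneous_X_pow 1 q) b hd
  obtain ⟨u, hu⟩ := exists_homogeneousComponent_mul_eq_mul isHomogeneous_katzmanQuartic c d
  have hm : (X 0 ^ 2 * X 1 ^ (q - 1) : MvPolynomial (Fin 2) (Polynomial k)).IsHomogeneous
      (2 + (q - 1)) :=
    (isHomogeneous_X_pow 0 2).mul (isHomogeneous_X_pow 1 (q - 1))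
  have he := homogeneousComponent_mul_eq_zero_of_lt hm e (by omega : d < 2 + (q - 1))
  have hcomp := congrArg (homogeneousComponent d) h
  rw [homogeneousComponent_C_mul, map_add, map_add, map_add, hα, hβ, hu, he, add_zero] at hcomp
  exact katzmanIdeal_le_katzmanJ (mem_katzmanIdeal_of_C_mul_eq hf hcomp)

end Katzman

theorem katzmanJ_colon_eq_self_general
    {k : Type*} [Field k] (q : ℕ) (f : Polynomial k) (hf : f ≠ 0) :
    (katzmanJ k q).colon
      ((Ideal.span {C f} : Ideal (MvPolynomial (Fin 2) (Polynomial k))) :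
        Set (MvPolynomial (Fin 2) (Polynomial k))) = katzmanJ k q := by
  ext w
  rw [Ideal.mem_colon_span_singleton]
  refine ⟨fun hw => ?_, fun hw => Ideal.mul_mem_right _ _ hw⟩
  rw [← sum_homogeneousComponent w]
  refine Ideal.sum_mem _ fun d _ => ?_
  rcases le_or_gt d q with hd | hd
  · exact homogeneousComponent_mem_katzmanJ hf (mul_comm w (C f) ▸ hw) hd
  · exact mem_katzmanJ_of_isHomogeneous (homogeneousComponent_isHomogeneous d w) hd

/-- For every nonzero `f ∈ k[t]`, the colon ideal `J_q : f` equals `J_q`. -/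
theorem katzmanJ_colon_eq_self
    {k : Type*} [Field k] {p : ℕ} (hp : p.Prime) [CharP k p]
    (q : ℕ) (hq : ∃ e : ℕ, q = p ^ e)
    (f : Polynomial k) (hf : f ≠ 0) :
    (katzmanJ k q).colon
      ((Ideal.span {C f} : Ideal (MvPolynomial (Fin 2) (Polynomial k))) :
        Set (MvPolynomial (Fin 2) (Polynomial k))) = katzmanJ k q :=
  katzmanJ_colon_eq_self_general q f hf
end

section
/- With notation as in Katzman's example, let τ_q = σ_1 ··· σ_r be a factorization of τ_q = 1 + t + ... + t^{q−2} into distinct irreducible polynomials in k[t]. Then I_q + (τ_q) = ∩_{i=1}^r (I_q + (σ_i)) is a primary decomposition, each I_q + (σ_i) being primary to the maximal ideal (x, y, σ_i), and (x, y, σ_i)^{2q} ⊆ I_q + (σ_i) for each i. -/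
/-! Since the `σ_i` are pairwise coprime in `k[t]`, their images stay coprime modulo `I_q`,
so `I_q + (∏ σ_i) = ⋂ (I_q + (σ_i))`. The ideal `(x, y, σ_i)` is the preimage of the maximal
ideal `(σ_i)` under `R → k[t]`, `x, y ↦ 0`, hence maximal; it contains `I_q + (σ_i)`, and its
`2q`-th power lies in `(x^q, y^q, σ_i)` because every monomial of degree `2q` in `x, y` is
divisible by `x^q` or `y^q`. So the radical of `I_q + (σ_i)` is maximal and the ideal is
primary. The factorization of `τ_q` into irreducibles forces `τ_q ≠ 0`, hence `q ≥ 2`. -/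

open MvPolynomial

open Ideal
open scoped Polynomial

namespace Ideal

variable {R : Type*} [CommRing R]

theorem sup_span_singleton_eq_comap_mk (I : Ideal R) (a : R) :
    I ⊔ span {a} = (span {Quotient.mk I a}).comap (Quotient.mk I) := by
  rw [← Set.image_singleton, ← map_span, comap_map_of_surjective _ Quotient.mk_surjective,
    ← RingHom.ker_eq_comap_bot, mk_ker, sup_comm]

theorem sup_span_singleton_prod_eq_iInf {ι : Type*} [Fintype ι] (I : Ideal R) {a : ι → R}
    (ha : Pairwise fun i j => IsCoprime (a i) (a j)) :
    I ⊔ span {∏ i, a i} = ⨅ i, I ⊔ span {a i} := by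
  simp only [sup_span_singleton_eq_comap_mk, ← comap_iInf, map_prod]
  rw [iInf_span_singleton fun i j hij => (ha hij).map (Quotient.mk I)]

theorem sup_pow_le_pow_sup (I J : Ideal R) (n : ℕ) : (I ⊔ J) ^ n ≤ I ^ n ⊔ J := by
  induction n with
  | zero => simp
  | succ n ih =>
    calc (I ⊔ J) ^ (n + 1) = (I ⊔ J) ^ n * (I ⊔ J) := pow_succ _ _
      _ ≤ (I ^ n ⊔ J) * (I ⊔ J) := mul_mono_left ih
      _ = I ^ n * I ⊔ (I ^ n * J ⊔ J * (I ⊔ J)) := by rw [sup_mul, mul_sup, sup_assoc]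
      _ ≤ I ^ (n + 1) ⊔ J := by
        rw [← pow_succ]
        exact sup_le_sup_left (sup_le mul_le_right mul_le_left) _

theorem radical_eq_of_le_of_pow_le {I M : Ideal R} [M.IsPrime] {n : ℕ} (hn : n ≠ 0)
    (hIM : I ≤ M) (hMI : M ^ n ≤ I) : I.radical = M :=
  le_antisymm ((radical_mono hIM).trans_eq (IsPrime.radical ‹_›))
    (by simpa only [radical_pow M hn, IsPrime.radical ‹_›] using radical_mono hMI)

end Ideal

namespace MvPolynomial

variable {σ R : Type*} [CommRing R]

theorem ker_constantCoeff :
    RingHom.ker (constantCoeff : MvPolynomial σ R →+* R) = idealOfVars σ R := by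
  ext p
  rw [RingHom.mem_ker, ← pow_one (idealOfVars σ R), mem_pow_idealOfVars_iff']
  simp [Finsupp.degree_eq_zero_iff, constantCoeff_eq]

theorem constantCoeff_surjective :
    Function.Surjective (constantCoeff : MvPolynomial σ R →+* R) :=
  fun a => ⟨C a, constantCoeff_C _ a⟩

theorem comap_constantCoeff_span_singleton (a : R) :
    (span {a}).comap (constantCoeff : MvPolynomial σ R →+* R) =
      idealOfVars σ R ⊔ span {C a} := by
  rw [← ker_constantCoeff, RingHom.ker_eq_comap_bot, sup_comm,
    ← comap_map_of_surjective _ constantCoeff_surjective, map_span, Set.image_singleton,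
    constantCoeff_C]

theorem idealOfVars_fin_two : idealOfVars (Fin 2) R = span {X 0, X 1} := by
  show span (Set.range X) = _
  congr 1
  ext
  simp [Fin.exists_fin_two, eq_comm]

theorem span_X_zero_X_one_C_eq_sup (a : R) :
    (span {X 0, X 1, C a} : Ideal (MvPolynomial (Fin 2) R)) = span {X 0, X 1} ⊔ span {C a} := by
  rw [← span_union, Set.insert_union, Set.singleton_union]

theorem isMaximal_span_X_zero_X_one_C {a : R} (ha : (span {a}).IsMaximal) :
    (span {X 0, X 1, C a} : Ideal (MvPolynomial (Fin 2) R)).IsMaximal := by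
  rw [span_X_zero_X_one_C_eq_sup, ← idealOfVars_fin_two, ← comap_constantCoeff_span_singleton]
  exact comap_isMaximal_of_surjective _ constantCoeff_surjective

end MvPolynomial

theorem Irreducible.isCoprime_of_not_associated {R : Type*} [CommRing R] [IsBezout R] {a b : R}
    (ha : Irreducible a) (hb : Irreducible b) (hab : ¬Associated a b) : IsCoprime a b :=
  ha.coprime_iff_not_dvd.2 fun h => hab (ha.associated_of_dvd hb h)

section Katzman

variable {k : Type*} [Field k]

theorem one_lt_of_tau_ne_zero {q : ℕ} (h : tau k q ≠ 0) : 1 < q := by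
  contrapose! h
  simp [tau, Nat.sub_eq_zero_of_le h]

theorem katzmanIdeal_le_span_X {q : ℕ} (hq : q ≠ 0) :
    katzmanIdeal k q ≤ span {X 0, X 1} := by
  have hx : (X 0 : MvPolynomial (Fin 2) k[X]) ∈ span {X 0, X 1} := subset_span (by simp)
  have hy : (X 1 : MvPolynomial (Fin 2) k[X]) ∈ span {X 0, X 1} := subset_span (by simp)
  rw [katzmanIdeal, span_le]
  rintro f (rfl | rfl | rfl)
  · exact pow_mem_of_mem _ hx q (Nat.pos_of_ne_zero hq)
  · exact pow_mem_of_mem _ hy q (Nat.pos_of_ne_zero hq)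
  · exact mul_mem_right _ _ (mul_mem_right _ _ (mul_mem_right _ _ hx))

theorem span_X_pow_le_katzmanIdeal (q : ℕ) :
    (span {X 0, X 1} : Ideal (MvPolynomial (Fin 2) k[X])) ^ (2 * q) ≤ katzmanIdeal k q :=
  calc (span {X 0, X 1} : Ideal (MvPolynomial (Fin 2) k[X])) ^ (2 * q)
      = (span {X 0} ⊔ span {X 1}) ^ (q + q) := by rw [span_insert, two_mul]
    _ ≤ span {X 0} ^ q ⊔ span {X 1} ^ q := sup_pow_add_le_pow_sup_pow
    _ = span {X 0 ^ q} ⊔ span {X 1 ^ q} := by rw [span_singleton_pow, span_singleton_pow]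
    _ ≤ katzmanIdeal k q := sup_le
        ((span_singleton_le_iff_mem _).2 (subset_span (by simp)))
        ((span_singleton_le_iff_mem _).2 (subset_span (by simp)))

theorem katzmanIdeal_sup_span_C_le {q : ℕ} (hq : q ≠ 0) (a : k[X]) :
    katzmanIdeal k q ⊔ span {C a} ≤ span {X 0, X 1, C a} := by
  rw [span_X_zero_X_one_C_eq_sup]
  exact sup_le_sup_right (katzmanIdeal_le_span_X hq) _

theorem span_X_zero_X_one_C_pow_le (q : ℕ) (a : k[X]) :
    (span {X 0, X 1, C a} : Ideal (MvPolynomial (Fin 2) k[X])) ^ (2 * q) ≤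
      katzmanIdeal k q ⊔ span {C a} := by
  rw [span_X_zero_X_one_C_eq_sup]
  exact (sup_pow_le_pow_sup _ _ _).trans (sup_le_sup_right (span_X_pow_le_katzmanIdeal q) _)

end Katzman

theorem katzman_plus_tau_primary_decomposition_general
    {k : Type*} [Field k]
    (q : ℕ)
    (r : ℕ) (σ : Fin r → Polynomial k)
    (hirr : ∀ i, Irreducible (σ i))
    (hdistinct : ∀ i j, i ≠ j → ¬ Associated (σ i) (σ j))
    (hfact : tau k q = ∏ i, σ i) :
    katzmanIdeal k q + Ideal.span {C (tau k q)} =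
      (⨅ i, katzmanIdeal k q + Ideal.span {C (σ i)}) ∧
    (∀ i, (katzmanIdeal k q + Ideal.span {C (σ i)}).IsPrimary) ∧
    (∀ i, (Ideal.span {X 0, X 1, C (σ i)} :
        Ideal (MvPolynomial (Fin 2) (Polynomial k))).IsMaximal) ∧
    (∀ i, (katzmanIdeal k q + Ideal.span {C (σ i)}).radical =
        Ideal.span {X 0, X 1, C (σ i)}) ∧
    (∀ i, (Ideal.span {X 0, X 1, C (σ i)} :
        Ideal (MvPolynomial (Fin 2) (Polynomial k))) ^ (2 * q) ≤
      katzmanIdeal k q + Ideal.span {C (σ i)}) := by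
  have hτ : tau k q ≠ 0 := hfact ▸ Finset.prod_ne_zero_iff.2 fun i _ => (hirr i).ne_zero
  have hq : q ≠ 0 := by
    have := one_lt_of_tau_ne_zero hτ
    omega
  have hmax (i : Fin r) :
      (span {X 0, X 1, C (σ i)} : Ideal (MvPolynomial (Fin 2) k[X])).IsMaximal :=
    isMaximal_span_X_zero_X_one_C (PrincipalIdealRing.isMaximal_of_irreducible (hirr i))
  have hrad (i : Fin r) :
      (katzmanIdeal k q + span {C (σ i)}).radical = span {X 0, X 1, C (σ i)} :=
    have := hmax i
    radical_eq_of_le_of_pow_le (mul_ne_zero two_ne_zero hq) (katzmanIdeal_sup_span_C_le hq _)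
      (span_X_zero_X_one_C_pow_le q _)
  refine ⟨?_, fun i => isPrimary_of_isMaximal_radical ((hrad i).symm ▸ hmax i), hmax, hrad,
    fun i => span_X_zero_X_one_C_pow_le q _⟩
  rw [hfact, map_prod]
  exact sup_span_singleton_prod_eq_iInf _ fun i j hij =>
    ((hirr i).isCoprime_of_not_associated (hirr j) (hdistinct i j hij)).map C

/-- If `τ_q = σ_1 ⋯ σ_r` with the `σ_i` pairwise non-associate irreducible polynomials in
`k[t]`, then `I_q + (τ_q) = ∩_i (I_q + (σ_i))` is a primary decomposition, each `I_q + (σ_i)`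
being primary to the maximal ideal `(x, y, σ_i)`, and `(x, y, σ_i)^{2q} ⊆ I_q + (σ_i)`. -/
theorem katzman_plus_tau_primary_decomposition
    {k : Type*} [Field k] {p : ℕ} (hp : p.Prime) [CharP k p]
    (q : ℕ) (hq : ∃ e : ℕ, q = p ^ e)
    (r : ℕ) (σ : Fin r → Polynomial k)
    (hirr : ∀ i, Irreducible (σ i))
    (hdistinct : ∀ i j, i ≠ j → ¬ Associated (σ i) (σ j))
    (hfact : tau k q = ∏ i, σ i) :
    katzmanIdeal k q + Ideal.span {C (tau k q)} =
      (⨅ i, katzmanIdeal k q + Ideal.span {C (σ i)}) ∧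
    (∀ i, (katzmanIdeal k q + Ideal.span {C (σ i)}).IsPrimary) ∧
    (∀ i, (Ideal.span {X 0, X 1, C (σ i)} :
        Ideal (MvPolynomial (Fin 2) (Polynomial k))).IsMaximal) ∧
    (∀ i, (katzmanIdeal k q + Ideal.span {C (σ i)}).radical =
        Ideal.span {X 0, X 1, C (σ i)}) ∧
    (∀ i, (Ideal.span {X 0, X 1, C (σ i)} :
        Ideal (MvPolynomial (Fin 2) (Polynomial k))) ^ (2 * q) ≤
      katzmanIdeal k q + Ideal.span {C (σ i)}) :=
  katzman_plus_tau_primary_decomposition_general q r σ hirr hdistinct hfact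
end

section
/- Let I_1, ..., I_m be monomial ideals in R = k[x_1,...,x_d] and let l be the largest exponent of a variable occurring in any of their generating sets. Then for any variable x and any n ≥ 1, (∑_j I_j^n) : x^{ln} = ∑_j (I_j^n : x^{ln}), and I_j^n : x^{ln} = (I_j : x^l)^n for each j. -/
/-!
If every generator of a monomial ideal `I = (X^g : g ∈ T)` has `x`-exponent at most `c`, then
`I : x^c` is generated by the monomials of `T` with their `x`-coordinate erased: a generator
divides `m · x^c` exactly when its erased version divides `m`. Powers and sums of monomial
ideals are again monomial, generated by the `n`-fold sumset `n • T` (whose `x`-exponents are at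
most `c * n`) and by unions. Erasing a coordinate is additive and commutes with unions, so it
commutes with both constructions.
-/

open MvPolynomial Pointwise

namespace Finsupp

variable {σ : Type*}

theorem apply_le_mul_of_mem_nsmul {S : Set (σ →₀ ℕ)} {x : σ} {c : ℕ} (hS : ∀ g ∈ S, g x ≤ c)
    (n : ℕ) : ∀ g ∈ n • S, g x ≤ c * n := by
  induction n with
  | zero => simp
  | succ n ih =>
    rw [succ_nsmul]
    rintro _ ⟨a, ha, b, hb, rfl⟩
    rw [add_apply, Nat.mul_succ]
    exact Nat.add_le_add (ih a ha) (hS b hb)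

theorem le_add_single_iff_erase_le {g μ : σ →₀ ℕ} {x : σ} {c : ℕ} (hg : g x ≤ c) :
    g ≤ μ + single x c ↔ g.erase x ≤ μ := by
  simp only [le_def]
  refine forall_congr' fun i => ?_
  rcases eq_or_ne i x with rfl | hi
  · simpa using hg.trans (Nat.le_add_left _ _)
  · simp [erase_ne hi, single_eq_of_ne' hi.symm]

theorem image_erase_nsmul (x : σ) (S : Set (σ →₀ ℕ)) (n : ℕ) :
    erase x '' (n • S) = n • (erase x '' S) :=
  Set.image_nsmul (eraseAddHom x) S n

end Finsupp

namespace MvPolynomial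

variable {σ R : Type*} [CommSemiring R]

theorem support_mul_monomial_one (p : MvPolynomial σ R) (s : σ →₀ ℕ) :
    (p * monomial s 1).support = p.support.map (addRightEmbedding s) :=
  AddMonoidAlgebra.support_coeff_mul_single p _ (by simp) _

theorem mul_monomial_mem_span_monomial_image_iff {p : MvPolynomial σ R} {s : σ →₀ ℕ}
    {T : Set (σ →₀ ℕ)} :
    p * monomial s 1 ∈ Ideal.span ((fun t => monomial t (1 : R)) '' T) ↔
      ∀ μ ∈ p.support, ∃ g ∈ T, g ≤ μ + s := by
  simp [mem_ideal_span_monomial_image, support_mul_monomial_one]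

theorem image_monomial_one_add (A B : Set (σ →₀ ℕ)) :
    (fun s => monomial s (1 : R)) '' (A + B) =
      (fun s => monomial s (1 : R)) '' A * (fun s => monomial s (1 : R)) '' B := by
  rw [← Set.image2_add, ← Set.image2_mul]
  exact Set.image_image2_distrib fun a b => by simp [monomial_mul]

theorem span_monomial_image_pow (S : Set (σ →₀ ℕ)) (n : ℕ) :
    Ideal.span ((fun s => monomial s (1 : R)) '' S) ^ n =
      Ideal.span ((fun s => monomial s (1 : R)) '' (n • S)) := by
  induction n with
  | zero => simp [Ideal.span_singleton_one]
  | succ n ih => rw [pow_succ, ih, Ideal.span_mul_span', succ_nsmul, image_monomial_one_add]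

theorem colon_span_X_pow_of_exponent_le (T : Set (σ →₀ ℕ)) (x : σ) {c : ℕ}
    (hT : ∀ g ∈ T, g x ≤ c) :
    (Ideal.span ((fun t => monomial t (1 : R)) '' T)).colon
        (Ideal.span {X x ^ c} : Ideal (MvPolynomial σ R)) =
      Ideal.span ((fun t => monomial t (1 : R)) '' (Finsupp.erase x '' T)) := by
  ext p
  rw [Ideal.mem_colon_span_singleton, X_pow_eq_monomial, mul_monomial_mem_span_monomial_image_iff,
    mem_ideal_span_monomial_image]
  refine forall₂_congr fun μ _ => ⟨?_, ?_⟩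
  · rintro ⟨g, hg, hle⟩
    exact ⟨g.erase x, ⟨g, hg, rfl⟩, (Finsupp.le_add_single_iff_erase_le (hT g hg)).mp hle⟩
  · rintro ⟨_, ⟨g, hg, rfl⟩, hle⟩
    exact ⟨g, hg, (Finsupp.le_add_single_iff_erase_le (hT g hg)).mpr hle⟩

theorem sum_span_monomial_image {ι : Type*} [Fintype ι] (T : ι → Set (σ →₀ ℕ)) :
    ∑ j, Ideal.span ((fun t => monomial t (1 : R)) '' T j) =
      Ideal.span ((fun t => monomial t (1 : R)) '' ⋃ j, T j) := by
  rw [Ideal.sum_eq_sup, Finset.sup_univ_eq_iSup, Set.image_iUnion, Ideal.span_iUnion]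

theorem colon_span_X_pow_sum_of_exponent_le {ι : Type*} [Fintype ι] (T : ι → Set (σ →₀ ℕ))
    (x : σ) {c : ℕ} (hT : ∀ j, ∀ g ∈ T j, g x ≤ c) :
    (∑ j, Ideal.span ((fun t => monomial t (1 : R)) '' T j)).colon
        (Ideal.span {X x ^ c} : Ideal (MvPolynomial σ R)) =
      ∑ j, (Ideal.span ((fun t => monomial t (1 : R)) '' T j)).colon
        (Ideal.span {X x ^ c} : Ideal (MvPolynomial σ R)) := by
  have hU : ∀ g ∈ ⋃ j, T j, g x ≤ c := by
    simp only [Set.mem_iUnion]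
    rintro g ⟨j, hg⟩
    exact hT j g hg
  rw [sum_span_monomial_image, colon_span_X_pow_of_exponent_le _ x hU, Set.image_iUnion,
    ← sum_span_monomial_image]
  exact Finset.sum_congr rfl fun j _ => (colon_span_X_pow_of_exponent_le _ x (hT j)).symm

end MvPolynomial

theorem colon_of_sum_of_powers_of_monomial_ideals_general
    {k : Type*} [Field k] {d m : ℕ}
    (I : Fin m → Ideal (MvPolynomial (Fin d) k))
    (G : Fin m → Finset (Fin d →₀ ℕ))
    (hI : ∀ j, I j = Ideal.span ((fun s => monomial s (1 : k)) ''
      ((G j : Finset (Fin d →₀ ℕ)) : Set (Fin d →₀ ℕ))))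
    (l : ℕ) (hl : l = Finset.univ.sup fun j : Fin m =>
      (G j).sup fun g => Finset.univ.sup fun v => g v)
    (x : Fin d) (n : ℕ) :
    (∑ j, I j ^ n).colon (Ideal.span {X x ^ (l * n)} : Ideal (MvPolynomial (Fin d) k)) =
      ∑ j, (I j ^ n).colon (Ideal.span {X x ^ (l * n)} : Ideal (MvPolynomial (Fin d) k)) ∧
    ∀ j, (I j ^ n).colon (Ideal.span {X x ^ (l * n)} : Ideal (MvPolynomial (Fin d) k)) =
      ((I j).colon (Ideal.span {X x ^ l} : Ideal (MvPolynomial (Fin d) k))) ^ n := by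
  have hG : ∀ j, ∀ g ∈ (G j : Set (Fin d →₀ ℕ)), g x ≤ l := fun j g hg => by
    rw [hl]
    exact le_trans (Finset.le_sup (f := fun v => g v) (Finset.mem_univ x)) <|
      le_trans (Finset.le_sup (f := fun g : Fin d →₀ ℕ => Finset.univ.sup fun v => g v) hg) <|
        Finset.le_sup (f := fun j => (G j).sup fun g => Finset.univ.sup fun v => g v)
          (Finset.mem_univ j)
  have hGn : ∀ j, ∀ g ∈ n • (G j : Set (Fin d →₀ ℕ)), g x ≤ l * n :=
    fun j => Finsupp.apply_le_mul_of_mem_nsmul (hG j) n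
  simp only [hI, span_monomial_image_pow]
  refine ⟨colon_span_X_pow_sum_of_exponent_le _ x hGn, fun j => ?_⟩
  rw [colon_span_X_pow_of_exponent_le _ x (hGn j), colon_span_X_pow_of_exponent_le _ x (hG j),
    span_monomial_image_pow, Finsupp.image_erase_nsmul]

/-- For monomial ideals `I_1, ..., I_m` with all exponents bounded by `l`, a variable `x`
and `n ≥ 1`: `(∑_j I_j^n) : x^{ln} = ∑_j (I_j^n : x^{ln})` and
`I_j^n : x^{ln} = (I_j : x^l)^n`. -/
theorem colon_of_sum_of_powers_of_monomial_ideals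
    {k : Type*} [Field k] {d m : ℕ}
    (I : Fin m → Ideal (MvPolynomial (Fin d) k))
    (G : Fin m → Finset (Fin d →₀ ℕ))
    (hI : ∀ j, I j = Ideal.span ((fun s => monomial s (1 : k)) ''
      ((G j : Finset (Fin d →₀ ℕ)) : Set (Fin d →₀ ℕ))))
    (l : ℕ) (hl : l = Finset.univ.sup fun j : Fin m =>
      (G j).sup fun g => Finset.univ.sup fun v => g v)
    (x : Fin d) (n : ℕ) (hn : 1 ≤ n) :
    (∑ j, I j ^ n).colon (Ideal.span {X x ^ (l * n)} : Ideal (MvPolynomial (Fin d) k)) =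
      ∑ j, (I j ^ n).colon (Ideal.span {X x ^ (l * n)} : Ideal (MvPolynomial (Fin d) k)) ∧
    ∀ j, (I j ^ n).colon (Ideal.span {X x ^ (l * n)} : Ideal (MvPolynomial (Fin d) k)) =
      ((I j).colon (Ideal.span {X x ^ l} : Ideal (MvPolynomial (Fin d) k))) ^ n :=
  colon_of_sum_of_powers_of_monomial_ideals_general I G hI l hl x n
end
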